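/- arXiv:2405.19304 — 2 statements merged into one kernel-verified Lean document; each statement's English description precedes it below -/
import Mathlib

section
/- Let r,m ≥ 1, let E ⊆ ℝ^r be a nonempty compact connected set and let f : E → ℝ^m be solvable. Then there exists a countable ordinal α (i.e. α < ω₁) such that the α-th set E_α in the sequence of f-removed sets on E is empty. -/
open Set Filter Topology

noncomputable section

/-- The set of points of `A` at which the restriction `f ↾ A` (with the subspace
topology on `A`) is discontinuous. -/
def discSet {X Y : Type*} [TopologicalSpace X] [TopologicalSpace Y]
    (f : X → Y) (A : Set X) : Set X :=
  {x | x ∈ A ∧ ¬ ContinuousWithinAt f A x}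

/-- `f` is of Baire class one on `E`: it is the pointwise limit on `E` of a
sequence of functions continuous on `E`. -/
def BaireOne {X Y : Type*} [TopologicalSpace X] [TopologicalSpace Y]
    (f : X → Y) (E : Set X) : Prop :=
  ∃ g : ℕ → X → Y, (∀ n, ContinuousOn (g n) E) ∧
    ∀ x ∈ E, Tendsto (fun n => g n x) atTop (nhds (f x))

/-- `f` is solvable on `E`: it is of Baire class one and for every closed
`K ⊆ E` the set of discontinuity points of `f ↾ K` is closed. -/
def SolvableOn {X Y : Type*} [TopologicalSpace X] [TopologicalSpace Y]
    (f : X → Y) (E : Set X) : Prop :=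
  BaireOne f E ∧ ∀ K : Set X, K ⊆ E → IsClosed K → IsClosed (discSet f K)

/-- The transfinite sequence of `f`-removed sets on `E`:
`E_0 = E`, `E_{α+1} = discSet f E_α`, and `E_λ = ⋂_{β<λ} E_β` at limits. -/
def removedSets {X Y : Type*} [TopologicalSpace X] [TopologicalSpace Y]
    (f : X → Y) (E : Set X) (α : Ordinal.{0}) : Set X :=
  Ordinal.limitRecOn α E (fun _ S => discSet f S)
    (fun o _ ih => ⋂ (β : Ordinal.{0}) (h : β < o), ih β h)

/-- `y` is differentiable on `[0,1]` with derivative `y'` (one-sided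
derivatives at the endpoints). -/
def DiffOnIcc (y y' : ℝ → ℝ) : Prop :=
  ∀ x ∈ Set.Icc (0:ℝ) 1, HasDerivWithinAt y (y' x) (Set.Icc (0:ℝ) 1) x

/-- The solvable ranking: the least ordinal `α` for which the `α`-th
`y'`-removed set on `[0,1]` is empty. -/
def solvRank (y' : ℝ → ℝ) : Ordinal.{0} :=
  sInf {α : Ordinal.{0} | removedSets y' (Set.Icc (0:ℝ) 1) α = ∅}

/-!
Each removed set `E_α` is closed, so the sequence is a decreasing ordinal-indexed sequence of
closed subsets of a second countable space, and it must stabilise at some countable stage: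
`E_{α+1} = E_α` with `α < ω₁`. On the other hand a Baire class one function on a nonempty complete
metric space has a point of continuity (Baire category theorem), so a nonempty `E_α` always loses
a point at the next stage. Hence the stable set `E_α` is empty.
-/

section ContinuityPoint

variable {X Y : Type*} [TopologicalSpace X] [BaireSpace X] [PseudoMetricSpace Y]
  {f : X → Y} {g : ℕ → X → Y}

theorem dense_iUnion_interior_dist_le (hg : ∀ n, Continuous (g n))
    (hlim : ∀ x, Tendsto (fun n => g n x) atTop (𝓝 (f x))) {ε : ℝ} (hε : 0 < ε) :
    Dense (⋃ n, interior {x | dist (f x) (g n x) ≤ ε}) := by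
  let C : ℕ → Set X := fun n => {x | ∀ p ≥ n, dist (g p x) (g n x) ≤ ε}
  have hC_closed : ∀ n, IsClosed (C n) := fun n => by
    simp only [C, ofPred_forall]
    exact isClosed_iInter fun p => isClosed_iInter fun _ =>
      isClosed_le ((hg p).dist (hg n)) continuous_const
  have hC_cover : ⋃ n, C n = univ := eq_univ_of_forall fun x => by
    obtain ⟨N, hN⟩ := Metric.cauchySeq_iff'.1 (hlim x).cauchySeq ε hε
    exact mem_iUnion.2 ⟨N, fun p hp => (hN p hp).le⟩
  have hC_sub : ∀ n, C n ⊆ {x | dist (f x) (g n x) ≤ ε} := fun n x hx =>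
    le_of_tendsto ((hlim x).dist tendsto_const_nhds) (eventually_atTop.2 ⟨n, hx⟩)
  exact (dense_iUnion_interior_of_closed hC_closed hC_cover).mono
    (iUnion_mono fun n => interior_mono (hC_sub n))

theorem exists_continuousAt_of_tendsto [Nonempty X] (hg : ∀ n, Continuous (g n))
    (hlim : ∀ x, Tendsto (fun n => g n x) atTop (𝓝 (f x))) :
    ∃ x, ContinuousAt f x := by
  have hres : Dense (⋂ k : ℕ, ⋃ n, interior {x | dist (f x) (g n x) ≤ 1 / (k + 1)}) :=
    dense_iInter_of_isOpen (fun _ => isOpen_iUnion fun _ => isOpen_interior)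
      fun _ => dense_iUnion_interior_dist_le hg hlim (by positivity)
  obtain ⟨x, hx⟩ := hres.nonempty
  refine ⟨x, continuousAt_of_locally_uniform_approx_of_continuousAt fun u hu => ?_⟩
  obtain ⟨ε, hε, hεu⟩ := Metric.mem_uniformity_dist.1 hu
  obtain ⟨k, hk⟩ := exists_nat_one_div_lt hε
  obtain ⟨n, hn⟩ := mem_iUnion.1 (mem_iInter.1 hx k)
  exact ⟨_, mem_interior_iff_mem_nhds.1 hn, g n, (hg n).continuousAt,
    fun y hy => hεu (lt_of_le_of_lt hy hk)⟩

end ContinuityPoint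

theorem BaireOne.mono {X Y : Type*} [TopologicalSpace X] [TopologicalSpace Y] {f : X → Y}
    {K E : Set X} (hf : BaireOne f E) (hKE : K ⊆ E) : BaireOne f K :=
  let ⟨g, hgc, hlim⟩ := hf
  ⟨g, fun n => (hgc n).mono hKE, fun x hx => hlim x (hKE hx)⟩

section BaireOne

variable {X Y : Type*} [TopologicalSpace X] [PseudoMetricSpace Y] {f : X → Y} {K : Set X}

theorem BaireOne.exists_continuousWithinAt [BaireSpace K] (hf : BaireOne f K)
    (hK : K.Nonempty) : ∃ x ∈ K, ContinuousWithinAt f K x := by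
  obtain ⟨g, hgc, hlim⟩ := hf
  have : Nonempty K := hK.to_subtype
  obtain ⟨x, hx⟩ := exists_continuousAt_of_tendsto (f := K.domRestrict f)
    (g := fun n => K.domRestrict (g n)) (fun n => (hgc n).domRestrict) fun x => hlim x x.2
  exact ⟨x, x.2, (continuousWithinAt_iff_continuousAt_domRestrict f x.2).2 hx⟩

theorem BaireOne.discSet_ne_self [BaireSpace K] (hf : BaireOne f K) (hK : K.Nonempty) :
    discSet f K ≠ K := fun h =>
  let ⟨x, hxK, hx⟩ := hf.exists_continuousWithinAt hK
  (h.symm ▸ hxK : x ∈ discSet f K).2 hx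

end BaireOne

theorem exists_lt_omega_one_add_one_eq {X : Type*} [TopologicalSpace X] [SecondCountableTopology X]
    {F : Ordinal.{0} → Set X} (hF : Antitone F) (hF_closed : ∀ α, IsClosed (F α)) :
    ∃ γ < Ordinal.omega 1, F (γ + 1) = F γ := by
  let B := TopologicalSpace.countableBasis X
  have : Countable B := (TopologicalSpace.countable_countableBasis X).to_subtype
  let S : Set X → Set Ordinal.{0} := fun U => {α | α < Ordinal.omega 1 ∧ Disjoint U (F α)}
  -- the first countable stage at which `F` leaves the basic open set `U` (junk value `0` if none)
  let τ : B → Ordinal.{0} := fun U => sInf (S U)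
  have hτ : ∀ U, τ U < Ordinal.omega 1 := fun U => by
    rcases (S U).eq_empty_or_nonempty with h | h
    · simpa only [τ, h, Ordinal.sInf_empty] using Ordinal.omega_pos 1
    · exact (csInf_mem h).1
  set γ := ⨆ U, τ U
  refine ⟨γ, Ordinal.iSup_lt_omega_one hτ, (hF le_self_add).antisymm fun x hx => ?_⟩
  by_contra hx'
  obtain ⟨U, hUB, hxU, hU⟩ := (TopologicalSpace.isBasis_countableBasis X).exists_subset_of_mem_open
    hx' (hF_closed _).isOpen_compl
  have hsucc : γ + 1 < Ordinal.omega 1 :=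
    (Cardinal.isSuccLimit_omega 1).add_one_lt (Ordinal.iSup_lt_omega_one hτ)
  have hdisj : Disjoint U (F (τ ⟨U, hUB⟩)) :=
    (csInf_mem (s := S U) ⟨_, hsucc, subset_compl_iff_disjoint_right.1 hU⟩).2
  exact hdisj.notMem_of_mem_left hxU (hF (Ordinal.le_iSup τ ⟨U, hUB⟩) hx)

section RemovedSets

variable {X Y : Type*} [TopologicalSpace X] [TopologicalSpace Y] (f : X → Y) (E : Set X)

theorem removedSets_zero : removedSets f E 0 = E :=
  Ordinal.limitRecOn_zero _ _ _

theorem removedSets_add_one (α : Ordinal.{0}) :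
    removedSets f E (α + 1) = discSet f (removedSets f E α) :=
  Ordinal.limitRecOn_add_one _ _ _ _

theorem removedSets_limit {α : Ordinal.{0}} (h : Order.IsSuccLimit α) :
    removedSets f E α = ⋂ (β : Ordinal.{0}) (_ : β < α), removedSets f E β :=
  Ordinal.limitRecOn_limit _ _ _ _ h

theorem discSet_subset (A : Set X) : discSet f A ⊆ A := fun _ hx => hx.1

theorem removedSets_antitone : Antitone (removedSets f E) := by
  intro α β h
  induction β using Ordinal.limitRecOn with
  | zero => rw [nonpos_iff_eq_zero.1 h]
  | add_one β ih =>
    rcases h.eq_or_lt with rfl | h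
    · rfl
    · rw [removedSets_add_one]
      exact (discSet_subset f _).trans (ih (Order.lt_add_one_iff.1 h))
  | limit β hβ _ =>
    rcases h.eq_or_lt with rfl | h
    · rfl
    · rw [removedSets_limit f E hβ]
      exact biInter_subset_of_mem h

theorem removedSets_subset (α : Ordinal.{0}) : removedSets f E α ⊆ E :=
  (removedSets_antitone f E (zero_le : 0 ≤ α)).trans (removedSets_zero f E).subset

theorem removedSets_isClosed (hE : IsClosed E)
    (hdisc : ∀ K, K ⊆ E → IsClosed K → IsClosed (discSet f K)) (α : Ordinal.{0}) :
    IsClosed (removedSets f E α) := by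
  induction α using Ordinal.limitRecOn with
  | zero => rwa [removedSets_zero]
  | add_one β ih =>
    rw [removedSets_add_one]
    exact hdisc _ (removedSets_subset f E β) ih
  | limit β hβ ih =>
    rw [removedSets_limit f E hβ]
    exact isClosed_biInter ih

end RemovedSets

theorem statement0_general (r m : ℕ)
    (E : Set (Fin r → ℝ)) (hcomp : IsCompact E)
    (f : (Fin r → ℝ) → (Fin m → ℝ)) (hf : SolvableOn f E) :
    ∃ α : Ordinal.{0}, α < (Ordinal.omega 1 : Ordinal.{0}) ∧ removedSets f E α = ∅ := by
  obtain ⟨hbaire, hdisc⟩ := hf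
  have hclosed := removedSets_isClosed f E hcomp.isClosed hdisc
  obtain ⟨α, hα, hfix⟩ := exists_lt_omega_one_add_one_eq (removedSets_antitone f E) hclosed
  refine ⟨α, hα, not_nonempty_iff_eq_empty.1 fun hne => ?_⟩
  have : CompleteSpace (removedSets f E α) := (hclosed α).completeSpace_coe
  rw [removedSets_add_one] at hfix
  exact (hbaire.mono (removedSets_subset f E α)).discSet_ne_self hne hfix

theorem statement0 (r m : ℕ) (hr : 1 ≤ r) (hm : 1 ≤ m)
    (E : Set (Fin r → ℝ)) (hne : E.Nonempty) (hcomp : IsCompact E)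
    (hconn : IsConnected E)
    (f : (Fin r → ℝ) → (Fin m → ℝ)) (hf : SolvableOn f E) :
    ∃ α : Ordinal.{0}, α < (Ordinal.omega 1 : Ordinal.{0}) ∧ removedSets f E α = ∅ :=
  statement0_general r m E hcomp f hf

end
end

section
/- Let E = [−5,5] × [−15,15] and define f : E → ℝ² by f(x,z) = (1, 2x·sin(1/x) − cos(1/x)) for x ≠ 0 and f(0,z) = (1,0). Define y : [−2,2] → ℝ² by y(t) = (t−1, (t−1)²·sin(1/(t−1))) for t ≠ 1 and y(1) = (0,0). Then y is differentiable (one-sided derivatives at the endpoints), y takes values in E, y(−2) = (−3, 9·sin(−1/3)), y'(t) = f(y(t)) for all t ∈ [−2,2], and y is the unique such solution: every differentiable z : [−2,2] → E with z(−2) = (−3, 9·sin(−1/3)) and z'(t) = f(z(t)) for all t ∈ [−2,2] equals y. -/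
open Set Filter Topology

noncomputable section

def E16 : Set (ℝ × ℝ) := Set.Icc (-5:ℝ) 5 ×ˢ Set.Icc (-15:ℝ) 15

def f16 : ℝ × ℝ → ℝ × ℝ := fun w =>
  if w.1 = 0 then (1, 0)
  else (1, 2 * w.1 * Real.sin (1 / w.1) - Real.cos (1 / w.1))

def y16 : ℝ → ℝ × ℝ := fun t =>
  (t - 1, if t = 1 then 0 else (t - 1) ^ 2 * Real.sin (1 / (t - 1)))

/-! With `g x = x² sin(1/x)` we have `y16 t = (t - 1, g (t - 1))` and `f16 (x, _) = (1, g' x)`;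
`g'(0) = 0` exists because `|g x| ≤ x²`. For uniqueness, equal derivatives and equal initial values
on an interval force equal functions: applied to the first coordinate, whose derivative is `1`, and
then, knowing that coordinate, to the second, whose derivative is `g'(t - 1)`. -/

-- With Lean's `0⁻¹ = 0` this is already `0` at `0`, unlike the `if` in `y16`.
def sqMulSinInv (x : ℝ) : ℝ := x ^ 2 * Real.sin x⁻¹

def sqMulSinInvDeriv (x : ℝ) : ℝ :=
  if x = 0 then 0 else 2 * x * Real.sin x⁻¹ - Real.cos x⁻¹

lemma abs_sqMulSinInv_le (x : ℝ) : |sqMulSinInv x| ≤ x ^ 2 := by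
  rw [sqMulSinInv, abs_mul, abs_pow, sq_abs]
  exact mul_le_of_le_one_right (sq_nonneg x) (Real.abs_sin_le_one _)

lemma hasDerivAt_zero_of_abs_le_sq {f : ℝ → ℝ} (hf : ∀ x, |f x| ≤ x ^ 2) :
    HasDerivAt f 0 0 := by
  have hf0 : f 0 = 0 := by simpa using hf 0
  rw [hasDerivAt_iff_isLittleO]
  simp only [hf0, sub_zero, smul_zero]
  refine Asymptotics.IsBigO.trans_isLittleO ?_ (Asymptotics.isLittleO_pow_id one_lt_two)
  exact Asymptotics.IsBigO.of_bound 1 <| Eventually.of_forall fun x => by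
    simpa [Real.norm_eq_abs] using hf x

lemma hasDerivAt_sqMulSinInv (x : ℝ) : HasDerivAt sqMulSinInv (sqMulSinInvDeriv x) x := by
  rcases eq_or_ne x 0 with rfl | hx
  · simpa [sqMulSinInvDeriv] using hasDerivAt_zero_of_abs_le_sq abs_sqMulSinInv_le
  · refine ((hasDerivAt_pow 2 x).fun_mul (hasDerivAt_inv hx).sin).congr_deriv ?_
    rw [sqMulSinInvDeriv, if_neg hx]
    field_simp
    ring

lemma y16_eq_sqMulSinInv (t : ℝ) : y16 t = (t - 1, sqMulSinInv (t - 1)) := by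
  rcases eq_or_ne t 1 with rfl | ht
  · simp [y16, sqMulSinInv]
  · simp [y16, sqMulSinInv, ht]

lemma f16_eq_sqMulSinInvDeriv (w : ℝ × ℝ) : f16 w = (1, sqMulSinInvDeriv w.1) := by
  unfold f16 sqMulSinInvDeriv
  split_ifs <;> simp_all

lemma hasDerivAt_y16 (t : ℝ) : HasDerivAt y16 (f16 (y16 t)) t := by
  have h1 : HasDerivAt (fun t : ℝ => t - 1) 1 t := (hasDerivAt_id t).sub_const 1
  rw [funext y16_eq_sqMulSinInv, f16_eq_sqMulSinInvDeriv]
  exact h1.prodMk ((hasDerivAt_sqMulSinInv (t - 1)).comp_sub_const t 1)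

lemma y16_mem_E16 {t : ℝ} (ht : t ∈ Icc (-2 : ℝ) 2) : y16 t ∈ E16 := by
  obtain ⟨h1, h2⟩ := ht
  have hsq : (t - 1) ^ 2 ≤ 9 := by nlinarith
  have hbound := abs_le.1 ((abs_sqMulSinInv_le (t - 1)).trans hsq)
  rw [y16_eq_sqMulSinInv]
  exact ⟨⟨by linarith, by linarith⟩, ⟨by linarith, by linarith⟩⟩

lemma HasDerivWithinAt.fst {z : ℝ → ℝ × ℝ} {v : ℝ × ℝ} {s : Set ℝ} {t : ℝ}
    (h : HasDerivWithinAt z v s t) : HasDerivWithinAt (fun u => (z u).1) v.1 s t := by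
  simpa using h.hasFDerivWithinAt.fst.hasDerivWithinAt

lemma HasDerivWithinAt.snd {z : ℝ → ℝ × ℝ} {v : ℝ × ℝ} {s : Set ℝ} {t : ℝ}
    (h : HasDerivWithinAt z v s t) : HasDerivWithinAt (fun u => (z u).2) v.2 s t := by
  simpa using h.hasFDerivWithinAt.snd.hasDerivWithinAt

lemma eqOn_Icc_of_hasDerivWithinAt_eq {E : Type*} [NormedAddCommGroup E] [NormedSpace ℝ E]
    {a b : ℝ} {u v d : ℝ → E}
    (hu : ∀ t ∈ Icc a b, HasDerivWithinAt u (d t) (Icc a b) t)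
    (hv : ∀ t ∈ Icc a b, HasDerivWithinAt v (d t) (Icc a b) t)
    (ha : u a = v a) : EqOn u v (Icc a b) := by
  have right_deriv {w : ℝ → E} (hw : ∀ t ∈ Icc a b, HasDerivWithinAt w (d t) (Icc a b) t)
      (t : ℝ) (ht : t ∈ Ico a b) : HasDerivWithinAt w (d t) (Ici t) t :=
    (hw t (Ico_subset_Icc_self ht)).mono_of_mem_nhdsWithin (Icc_mem_nhdsGE_of_mem ht)
  exact eq_of_has_deriv_right_eq (right_deriv hu) (right_deriv hv)
    (fun t ht => (hu t ht).continuousWithinAt) (fun t ht => (hv t ht).continuousWithinAt) ha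

lemma eqOn_y16_of_hasDerivWithinAt {z : ℝ → ℝ × ℝ} {a b : ℝ}
    (hz : ∀ t ∈ Icc a b, HasDerivWithinAt z (f16 (z t)) (Icc a b) t) (ha : z a = y16 a) :
    EqOn z y16 (Icc a b) := by
  have hy (t : ℝ) : HasDerivWithinAt y16 (f16 (y16 t)) (Icc a b) t :=
    (hasDerivAt_y16 t).hasDerivWithinAt
  have hfst : EqOn (fun t => (z t).1) (fun t => (y16 t).1) (Icc a b) :=
    eqOn_Icc_of_hasDerivWithinAt_eq (d := fun _ => 1)
      (fun t ht => by simpa [f16_eq_sqMulSinInvDeriv] using (hz t ht).fst)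
      (fun t _ => by simpa [f16_eq_sqMulSinInvDeriv] using (hy t).fst) (congrArg Prod.fst ha)
  have hsnd : EqOn (fun t => (z t).2) (fun t => (y16 t).2) (Icc a b) :=
    eqOn_Icc_of_hasDerivWithinAt_eq (d := fun t => sqMulSinInvDeriv (y16 t).1)
      (fun t ht => by simpa [f16_eq_sqMulSinInvDeriv, hfst ht] using (hz t ht).snd)
      (fun t _ => by simpa [f16_eq_sqMulSinInvDeriv] using (hy t).snd) (congrArg Prod.snd ha)
  exact fun t ht => Prod.ext (hfst ht) (hsnd ht)

theorem statement16 :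
    (∀ t ∈ Set.Icc (-2:ℝ) 2, y16 t ∈ E16) ∧
    y16 (-2) = (-3, 9 * Real.sin (-(1/3))) ∧
    (∀ t ∈ Set.Icc (-2:ℝ) 2, HasDerivWithinAt y16 (f16 (y16 t)) (Set.Icc (-2:ℝ) 2) t) ∧
    (∀ z : ℝ → ℝ × ℝ, (∀ t ∈ Set.Icc (-2:ℝ) 2, z t ∈ E16) →
      z (-2) = (-3, 9 * Real.sin (-(1/3))) →
      (∀ t ∈ Set.Icc (-2:ℝ) 2, HasDerivWithinAt z (f16 (z t)) (Set.Icc (-2:ℝ) 2) t) →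
      ∀ t ∈ Set.Icc (-2:ℝ) 2, z t = y16 t) := by
  have hval : y16 (-2) = (-3, 9 * Real.sin (-(1/3))) := by norm_num [y16]
  exact ⟨fun t ht => y16_mem_E16 ht, hval, fun t _ => (hasDerivAt_y16 t).hasDerivWithinAt,
    fun z _ hz0 hz => eqOn_y16_of_hasDerivWithinAt hz (hz0.trans hval.symm)⟩

end
end
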